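/- (Suboptimality of policies induced by tight constraints.) Let π = (μ_0,…,μ_{N−1}) be any Markov policy and let V_k^π(x) = P_{k,x}^π( x_j ∈ A for all k ≤ j ≤ N ). Then for every 0 ≤ k < N and x ∈ A, V_k^π(x) ≤ ∫_A W_{k+1}(y) T(dy|x,μ_k(x)). In particular, if for some x ∈ A the chosen input ũ = μ_k(x) satisfies ∫_A W_{k+1}(y) T(dy|x,ũ) < W_k(x), then V_k^π(x) < W_k(x), i.e. the policy is strictly suboptimal at x. -/

import Mathlib

open MeasureTheory ProbabilityTheory Set

noncomputable section

namespace StochasticSafety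

variable {X U : Type*} [MeasurableSpace X] [MeasurableSpace U]

/-- A Markov policy: a sequence of (Borel-)measurable maps from states to actions. -/
structure Policy (X U : Type*) [MeasurableSpace X] [MeasurableSpace U] where
  act : ℕ → X → U
  measurable_act : ∀ k, Measurable (act k)

/-- The closed-loop kernel `κ_k^π(·|x) = T(·|x, μ_k(x))` of a policy at time `k`. -/
def Policy.kernel (T : Kernel (X × U) X) (π : Policy X U) (k : ℕ) : Kernel X X :=
  T.comap (fun x => (x, π.act k x)) (measurable_id.prodMk (π.measurable_act k))

/-- One step of the closed-loop trajectory evolution at time `j`: given the trajectory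
built so far, sample `y` from `κ` applied at coordinate `j` and record it at
coordinate `j + 1`. -/
def step (κ : Kernel X X) (j : ℕ) : Kernel (ℕ → X) (ℕ → X) :=
  Kernel.map (Kernel.id ×ₖ κ.comap (fun ω => ω j) (measurable_pi_apply j))
    (fun p => Function.update p.1 (j + 1) p.2)

/-- Kernel describing `m` steps of the trajectory evolution, starting at time `k`,
under the time-dependent kernels `κ`. -/
def evolve (κ : ℕ → Kernel X X) : ℕ → ℕ → Kernel (ℕ → X) (ℕ → X)
  | _, 0 => Kernel.id
  | k, (m + 1) => (evolve κ (k + 1) m) ∘ₖ step (κ k) k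

/-- The law `P_{k,x}^π` of the closed-loop trajectory `(x_k, …, x_N)` started at `x`
at time `k` under policy `π` (finite Ionescu–Tulcea composition of the closed-loop
kernels): the states `x_k, …, x_N` are recorded in coordinates `k, …, N` of `ℕ → X`,
all other coordinates carry the irrelevant initial value `x`. -/
def trajLaw (T : Kernel (X × U) X) (π : Policy X U) (N k : ℕ) (x : X) :
    Measure (ℕ → X) :=
  evolve (π.kernel T) k (N - k) (fun _ => x)

/-- The event that the trajectory stays in `A` at all times `j` with `k ≤ j ≤ N`. -/
def safeEvent (A : Set X) (k N : ℕ) : Set (ℕ → X) :=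
  {ω | ∀ j, k ≤ j → j ≤ N → ω j ∈ A}

/-- The event that the trajectory visits `A` at some time `j` with `k ≤ j ≤ N`. -/
def reachEvent (A : Set X) (k N : ℕ) : Set (ℕ → X) :=
  {ω | ∃ j, k ≤ j ∧ j ≤ N ∧ ω j ∈ A}

/-!
The probability `V_j(x)` that the closed-loop trajectory started at `x` at time `j` stays in `A`
obeys the policy-evaluation recursion `V_j(x) = 1_A(x) ∫ V_{j+1} dκ_j(x)`, `V_N = 1_A`: after one
step the chain never changes the coordinates up to `j`, so the constraint at time `j` factors out.
The maximal value `W` satisfies the same recursion with a supremum over the action in place of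
`μ_j(x)`, so backward induction gives `V_j ≤ W_j`. At `x ∈ A`, since `V_{k+1}` vanishes outside
`A`, one step of the recursion yields
`V_k(x) = ∫_A V_{k+1} dT(x, μ_k x) ≤ ∫_A W_{k+1} dT(x, μ_k x)`.
-/

open scoped ENNReal

instance Policy.isSFiniteKernel_kernel (T : Kernel (X × U) X) [IsSFiniteKernel T]
    (π : Policy X U) (k : ℕ) : IsSFiniteKernel (π.kernel T k) := by
  unfold Policy.kernel; infer_instance

lemma Policy.kernel_apply (T : Kernel (X × U) X) (π : Policy X U) (k : ℕ) (x : X) :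
    π.kernel T k x = T (x, π.act k x) :=
  Kernel.comap_apply _ _ _

lemma measurableSet_safeEvent {A : Set X} (hA : MeasurableSet A) (k N : ℕ) :
    MeasurableSet (safeEvent A k N) := by
  simp only [safeEvent, ofPred_forall]
  exact .iInter fun j => .iInter fun _ => .iInter fun _ => measurable_pi_apply j hA

lemma safeEvent_eq_inter {α : Type*} (A : Set α) {j N : ℕ} (hjN : j ≤ N) :
    safeEvent A j N = {ω | ω j ∈ A} ∩ safeEvent A (j + 1) N := by
  ext ω
  refine ⟨fun h => ⟨h j le_rfl hjN, fun i hi hiN => h i (by omega) hiN⟩, ?_⟩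
  rintro ⟨hj, h⟩ i hi hiN
  rcases hi.eq_or_lt with rfl | hlt
  · exact hj
  · exact h i hlt hiN

lemma safeEvent_of_lt {α : Type*} (A : Set α) {k N : ℕ} (hNk : N < k) : safeEvent A k N = univ :=
  eq_univ_of_forall fun _ _ hki hiN => absurd (hki.trans hiN) (not_le.2 hNk)

lemma step_apply (κ : Kernel X X) [IsSFiniteKernel κ] (j : ℕ) (ω₀ : ℕ → X) :
    step κ j ω₀ = (κ (ω₀ j)).map (Function.update ω₀ (j + 1)) := by
  rw [step, Kernel.map_apply _ measurable_update', Kernel.prod_apply, Kernel.id_apply,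
    Kernel.comap_apply, Measure.dirac_prod,
    Measure.map_map measurable_update' measurable_prodMk_left]
  rfl

section Evolve

variable (κ : ℕ → Kernel X X) [∀ n, IsSFiniteKernel (κ n)]

lemma ae_evolve_apply_mem {s : Set X} (hs : MeasurableSet s) {i j : ℕ} (hij : i ≤ j)
    (m : ℕ) {ω₀ : ℕ → X} (h : ω₀ i ∈ s) : ∀ᵐ ω ∂evolve κ j m ω₀, ω i ∈ s := by
  have hmeas : MeasurableSet {ω : ℕ → X | ω i ∉ s} := (measurable_pi_apply i hs).compl
  rw [ae_iff]
  induction m generalizing j ω₀ with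
  | zero => exact (Measure.dirac_apply' _ hmeas).trans (indicator_of_notMem (not_not.2 h) _)
  | succ m ih =>
    rw [evolve, Kernel.comp_apply' _ _ _ hmeas, step_apply,
      lintegral_map (Kernel.measurable_coe _ hmeas) (measurable_update _)]
    refine (lintegral_congr fun y => ih (by omega) ?_).trans lintegral_zero
    rwa [Function.update_of_ne (by omega)]

lemma evolve_inter_setOf_apply_mem {s : Set X} (hs : MeasurableSet s) {i j : ℕ} (hij : i ≤ j)
    (m : ℕ) (ω₀ : ℕ → X) (S : Set (ℕ → X)) :
    evolve κ j m ω₀ ({ω | ω i ∈ s} ∩ S) = s.indicator (fun _ => evolve κ j m ω₀ S) (ω₀ i) := by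
  by_cases h : ω₀ i ∈ s
  · rw [indicator_of_mem h, inter_comm]
    exact measure_inter_conull (ae_evolve_apply_mem κ hs hij m h)
  · rw [indicator_of_notMem h]
    refine measure_mono_null ?_ (ae_evolve_apply_mem κ hs.compl hij m h)
    exact fun _ hω => not_not_intro hω.1

end Evolve

/-- `safeProb κ A m j x`: probability that the chain driven by `κ_j, …, κ_{j+m-1}` and started
at `x` at time `j` stays in `A` at times `j, …, j + m`. -/
def safeProb (κ : ℕ → Kernel X X) (A : Set X) : ℕ → ℕ → X → ℝ≥0∞
  | 0, _ => A.indicator 1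
  | m + 1, j => A.indicator fun x => ∫⁻ y, safeProb κ A m (j + 1) y ∂κ j x

lemma support_safeProb_subset (κ : ℕ → Kernel X X) (A : Set X) (m j : ℕ) :
    Function.support (safeProb κ A m j) ⊆ A := by
  cases m <;> exact support_indicator_subset

lemma safeProb_succ_of_mem (κ : ℕ → Kernel X X) {A : Set X} {x : X} (hx : x ∈ A) (m j : ℕ) :
    safeProb κ A (m + 1) j x = ∫⁻ y in A, safeProb κ A m (j + 1) y ∂κ j x := by
  rw [safeProb, indicator_of_mem hx, setLIntegral_eq_of_support_subset (support_safeProb_subset ..)]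

theorem evolve_safeEvent (κ : ℕ → Kernel X X) [∀ n, IsSFiniteKernel (κ n)] {A : Set X}
    (hA : MeasurableSet A) (m j : ℕ) (ω₀ : ℕ → X) :
    evolve κ j m ω₀ (safeEvent A j (j + m)) = safeProb κ A m j (ω₀ j) := by
  induction m generalizing j ω₀ with
  | zero =>
    rw [safeEvent_eq_inter A (Nat.le_add_right j 0), evolve_inter_setOf_apply_mem κ hA le_rfl,
      safeEvent_of_lt A (by omega : j + 0 < j + 1), evolve, Kernel.id_apply, measure_univ]
    rfl
  | succ m ih =>
    have hS := measurableSet_safeEvent hA j (j + (m + 1))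
    have hstep : ∀ y,
        evolve κ (j + 1) m (Function.update ω₀ (j + 1) y) (safeEvent A j (j + (m + 1)))
          = A.indicator (fun _ => safeProb κ A m (j + 1) y) (ω₀ j) := fun y => by
      rw [safeEvent_eq_inter A (by omega), evolve_inter_setOf_apply_mem κ hA (Nat.le_succ j),
        Function.update_of_ne (by omega), show j + (m + 1) = j + 1 + m by omega, ih,
        Function.update_self]
    rw [evolve, Kernel.comp_apply' _ _ _ hS, step_apply,
      lintegral_map (Kernel.measurable_coe _ hS) (measurable_update _), safeProb]
    simp_rw [hstep]
    by_cases h : ω₀ j ∈ A <;> simp [h]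

theorem trajLaw_safeEvent (T : Kernel (X × U) X) [IsSFiniteKernel T] (π : Policy X U)
    {A : Set X} (hA : MeasurableSet A) {N k : ℕ} (hkN : k ≤ N) (x : X) :
    trajLaw T π N k x (safeEvent A k N) = safeProb (π.kernel T) A (N - k) k x := by
  have h := evolve_safeEvent (π.kernel T) hA (N - k) k fun _ => x
  rwa [Nat.add_sub_cancel' hkN] at h

lemma integrable_of_mem_Icc {α : Type*} [MeasurableSpace α] {μ : Measure α} [IsFiniteMeasure μ]
    {f : α → ℝ} (hf : Measurable f) (h01 : ∀ a, f a ∈ Icc 0 1) : Integrable f μ :=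
  .of_bound hf.aestronglyMeasurable 1 <| ae_of_all _ fun a =>
    abs_le.2 ⟨by linarith [(h01 a).1], (h01 a).2⟩

lemma integral_mem_Icc {α : Type*} [MeasurableSpace α] {μ : Measure α} [IsProbabilityMeasure μ]
    {f : α → ℝ} (hf : Measurable f) (h01 : ∀ a, f a ∈ Icc 0 1) : ∫ a, f a ∂μ ∈ Icc 0 1 :=
  ⟨integral_nonneg fun a => (h01 a).1, by
    simpa using integral_mono (integrable_of_mem_Icc (μ := μ) hf h01) (integrable_const 1)
      fun a => (h01 a).2⟩

section Bellman

variable {T : Kernel (X × U) X} [IsMarkovKernel T] {A : Set X} {f : X → ℝ}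

lemma indicator_integral_mem_Icc (hf : Measurable f) (h01 : ∀ y, f y ∈ Icc 0 1) (u : U) (x : X) :
    A.indicator (fun x' => ∫ y, f y ∂T (x', u)) x ∈ Icc 0 1 := by
  by_cases hx : x ∈ A
  · rw [indicator_of_mem hx]; exact integral_mem_Icc hf h01
  · simp [hx]

lemma bddAbove_range_indicator_integral (hf : Measurable f) (h01 : ∀ y, f y ∈ Icc 0 1) (x : X) :
    BddAbove (range fun u : U => A.indicator (fun x' => ∫ y, f y ∂T (x', u)) x) :=
  ⟨1, forall_mem_range.2 fun u => (indicator_integral_mem_Icc hf h01 u x).2⟩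

lemma integral_le_iSup_indicator_integral (hf : Measurable f) (h01 : ∀ y, f y ∈ Icc 0 1)
    {x : X} (hx : x ∈ A) (u : U) :
    ∫ y, f y ∂T (x, u) ≤ ⨆ u : U, A.indicator (fun x' => ∫ y, f y ∂T (x', u)) x := by
  refine le_ciSup_of_le (bddAbove_range_indicator_integral hf h01 x) u ?_
  rw [indicator_of_mem hx]

variable {N : ℕ} {W : ℕ → X → ℝ}

lemma value_mem_Icc [Nonempty U] (hWmeas : ∀ k, Measurable (W k))
    (hWN : ∀ x, W N x = A.indicator 1 x)
    (hW : ∀ k < N, ∀ x,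
      W k x = ⨆ u : U, A.indicator (fun x' => ∫ y, W (k + 1) y ∂(T (x', u))) x)
    {k : ℕ} (hk : k ≤ N) :
    ∀ x, W k x ∈ Icc 0 1 := by
  induction hk using Nat.decreasingInduction with
  | self => intro x; rw [hWN]; by_cases hx : x ∈ A <;> simp [hx]
  | of_succ k hk ih =>
    intro x
    have hterm := fun u : U => indicator_integral_mem_Icc (A := A) (T := T) (hWmeas _) ih u x
    rw [hW k hk x]
    exact ⟨le_ciSup_of_le (bddAbove_range_indicator_integral (hWmeas _) ih x)
      (Classical.arbitrary U) (hterm _).1, ciSup_le fun u => (hterm u).2⟩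

lemma safeProb_le_value [Nonempty U] (hWmeas : ∀ k, Measurable (W k))
    (hWN : ∀ x, W N x = A.indicator 1 x)
    (hW : ∀ k < N, ∀ x,
      W k x = ⨆ u : U, A.indicator (fun x' => ∫ y, W (k + 1) y ∂(T (x', u))) x)
    (π : Policy X U) {m j : ℕ} (hjm : j + m = N) (x : X) :
    safeProb (π.kernel T) A m j x ≤ ENNReal.ofReal (W j x) := by
  induction m generalizing j x with
  | zero =>
    obtain rfl : j = N := hjm
    rw [hWN]
    by_cases hx : x ∈ A <;> simp [safeProb, hx]
  | succ m ih =>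
    by_cases hx : x ∈ A
    · have hW01 := value_mem_Icc hWmeas hWN hW (k := j + 1) (by omega)
      rw [safeProb, indicator_of_mem hx, Policy.kernel_apply]
      calc ∫⁻ y, safeProb (π.kernel T) A m (j + 1) y ∂T (x, π.act j x)
          ≤ ∫⁻ y, ENNReal.ofReal (W (j + 1) y) ∂T (x, π.act j x) :=
            lintegral_mono fun y => ih (by omega) y
        _ = ENNReal.ofReal (∫ y, W (j + 1) y ∂T (x, π.act j x)) :=
            (ofReal_integral_eq_lintegral_ofReal (integrable_of_mem_Icc (hWmeas _) hW01)
              (ae_of_all _ fun y => (hW01 y).1)).symm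
        _ ≤ ENNReal.ofReal (W j x) := by
            rw [hW j (by omega) x]
            exact ENNReal.ofReal_le_ofReal
              (integral_le_iSup_indicator_integral (hWmeas _) hW01 hx _)
    · simp [safeProb, hx]

end Bellman

variable [StandardBorelSpace X] [TopologicalSpace U]
  [TopologicalSpace.MetrizableSpace U] [CompactSpace U] [Nonempty U] [BorelSpace U]

/-- suboptimality of policies induced by tight constraints: for any
Markov policy `π`, any `k < N` and any `x ∈ A`, the policy safety value satisfies
`V_k^π(x) ≤ ∫_A W_{k+1}(y) T(dy|x, μ_k(x))`; in particular if the chosen input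
`ũ = μ_k(x)` satisfies `∫_A W_{k+1}(y) T(dy|x,ũ) < W_k(x)` then `V_k^π(x) < W_k(x)`,
i.e. the policy is strictly suboptimal at `x`. -/
theorem tight_constraint_policy_suboptimal
    (T : Kernel (X × U) X) [IsMarkovKernel T]
    (N : ℕ) (A : Set X) (hA : MeasurableSet A)
    (W : ℕ → X → ℝ) (hWmeas : ∀ k, Measurable (W k))
    (hWN : ∀ x, W N x = A.indicator 1 x)
    (hW : ∀ k < N, ∀ x,
      W k x = ⨆ u : U, A.indicator (fun x' => ∫ y, W (k + 1) y ∂(T (x', u))) x)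
    (π : Policy X U) :
    ∀ k < N, ∀ x ∈ A,
      (trajLaw T π N k x (safeEvent A k N)).toReal
          ≤ ∫ y in A, W (k + 1) y ∂(T (x, π.act k x)) ∧
      ((∫ y in A, W (k + 1) y ∂(T (x, π.act k x))) < W k x →
        (trajLaw T π N k x (safeEvent A k N)).toReal < W k x) := by
  intro k hk x hx
  have hW01 := value_mem_Icc hWmeas hWN hW (k := k + 1) hk
  have hV : trajLaw T π N k x (safeEvent A k N)
      ≤ ENNReal.ofReal (∫ y in A, W (k + 1) y ∂T (x, π.act k x)) :=
    calc trajLaw T π N k x (safeEvent A k N)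
        = ∫⁻ y in A, safeProb (π.kernel T) A (N - (k + 1)) (k + 1) y ∂T (x, π.act k x) := by
          rw [trajLaw_safeEvent T π hA hk.le, show N - k = N - (k + 1) + 1 by omega,
            safeProb_succ_of_mem _ hx, Policy.kernel_apply]
      _ ≤ ∫⁻ y in A, ENNReal.ofReal (W (k + 1) y) ∂T (x, π.act k x) :=
          lintegral_mono fun y => safeProb_le_value hWmeas hWN hW π (by omega) y
      _ = ENNReal.ofReal (∫ y in A, W (k + 1) y ∂T (x, π.act k x)) :=
          (ofReal_integral_eq_lintegral_ofReal (integrable_of_mem_Icc (hWmeas _) hW01).restrict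
            (ae_of_all _ fun y => (hW01 y).1)).symm
  have hle := ENNReal.toReal_le_of_le_ofReal (setIntegral_nonneg hA fun y _ => (hW01 y).1) hV
  exact ⟨hle, hle.trans_lt⟩

end StochasticSafety
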